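/- arXiv:2010.15662 — 6 statements merged into one kernel-verified Lean document; each statement's English description precedes it below -/
import Mathlib

section
/- If three binary classifiers are independent in their errors on a sample in which both labels occur, then the ground-truth tuple (φ_α, φ_{1,α}, φ_{2,α}, φ_{3,α}, φ_{1,β}, φ_{2,β}, φ_{3,β}) satisfies the independent-classifiers quartic system associated with the observed frequencies f_{ℓ₁,ℓ₂,ℓ₃} = m_{ℓ₁,ℓ₂,ℓ₃}/M; that is, for every label triple (ℓ₁, ℓ₂, ℓ₃), m_{ℓ₁,ℓ₂,ℓ₃}/M = φ_α·Π_{i=1}^{3} p_i(ℓ_i) + (1 − φ_α)·Π_{i=1}^{3} q_i(ℓ_i), where p_i(α) = φ_{i,α}, p_i(β) = 1 − φ_{i,α}, q_i(α) = 1 − φ_{i,β}, q_i(β) = φ_{i,β}. -/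
/-!
Labels are modeled by `Bool`, with `true` playing the role of α and `false` the role of β.
A sample is `Fin M` with a true-label function `t : Fin M → Bool`; the three binary
classifiers are `c : Fin 3 → Fin M → Bool`.
-/

open Finset

/-- `labelCount M t ℓ` is `m(ℓ)`, the number of items with true label `ℓ`. -/
def labelCount (M : ℕ) (t : Fin M → Bool) (ℓ : Bool) : ℕ :=
  (univ.filter fun d => t d = ℓ).card

/-- The prevalence `φ_α = m(α)/M` of the label α (`true`). -/
noncomputable def prevalence (M : ℕ) (t : Fin M → Bool) : ℝ :=
  (labelCount M t true : ℝ) / M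

/-- The label accuracy `φ_{i,ℓ}` of a classifier `c` on the label `ℓ`. -/
noncomputable def accuracy (M : ℕ) (t : Fin M → Bool) (c : Fin M → Bool) (ℓ : Bool) : ℝ :=
  ((univ.filter fun d => t d = ℓ ∧ c d = ℓ).card : ℝ) / (labelCount M t ℓ : ℝ)

/-- The decision event count `m_{ℓ₁,ℓ₂,ℓ₃}` for three classifiers. -/
def decisionCount (M : ℕ) (c : Fin 3 → Fin M → Bool) (L : Fin 3 → Bool) : ℕ :=
  (univ.filter fun d => ∀ i, c i d = L i).card

/-- The right-hand side of the independent-classifiers quartic system at the label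
triple `L`, in the unknowns `(φ, a₁, a₂, a₃, b₁, b₂, b₃)`:
`φ·Π p_i(ℓ_i) + (1−φ)·Π q_i(ℓ_i)` with `p_i(α) = a_i`, `p_i(β) = 1 − a_i`,
`q_i(α) = 1 − b_i`, `q_i(β) = b_i`. -/
noncomputable def quarticRHS (φ : ℝ) (a b : Fin 3 → ℝ) (L : Fin 3 → Bool) : ℝ :=
  φ * ∏ i, (if L i then a i else 1 - a i) +
    (1 - φ) * ∏ i, (if L i then 1 - b i else b i)

/-- The three classifiers are independent in their errors on the sample:
for each label `ℓ` occurring in the sample and each triple of decisions,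
`m(ℓ)² · #{d : t d = ℓ ∧ ∀ i, c_i d = ℓ_i} = Π_i #{d : t d = ℓ ∧ c_i d = ℓ_i}`. -/
def IndependentErrors (M : ℕ) (t : Fin M → Bool) (c : Fin 3 → Fin M → Bool) : Prop :=
  ∀ ℓ : Bool, 0 < labelCount M t ℓ → ∀ L : Fin 3 → Bool,
    (labelCount M t ℓ) ^ 2 * (univ.filter fun d => t d = ℓ ∧ ∀ i, c i d = L i).card
      = ∏ i, (univ.filter fun d => t d = ℓ ∧ c i d = L i).card

/-!
Conditioning on the true label splits every decision count as
`m_{ℓ₁ℓ₂ℓ₃} = Σ_ℓ #{t = ℓ, c₁ = ℓ₁, c₂ = ℓ₂, c₃ = ℓ₃}`. Within the class of label `ℓ`,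
independence turns each summand into `m(ℓ) · Π_i (#{t = ℓ, c_i = ℓ_i} / m(ℓ))`, and the
factor `#{t = ℓ, c_i = ℓ_i} / m(ℓ)` is the accuracy `φ_{i,ℓ}` when `ℓ_i = ℓ` and its
complement `1 − φ_{i,ℓ}` otherwise; an empty class contributes `0` on both sides.
Dividing by `M` gives the quartic system.
-/

theorem card_filter_eq_card_filter_and_true_add_false {α : Type*} [Fintype α]
    (p : α → Prop) [DecidablePred p] (f : α → Bool) :
    #{x | p x} = #{x | f x = true ∧ p x} + #{x | f x = false ∧ p x} := by
  simp only [card_filter, ← sum_add_distrib]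
  refine sum_congr rfl fun x _ => ?_
  by_cases hp : p x <;> cases f x <;> simp [hp]

section Sample

variable {M : ℕ} {t : Fin M → Bool}

theorem labelCount_true_add_false : labelCount M t true + labelCount M t false = M := by
  simpa [labelCount] using
    (card_filter_eq_card_filter_and_true_add_false (fun _ : Fin M => True) t).symm

theorem one_sub_prevalence (hM : M ≠ 0) :
    1 - prevalence M t = (labelCount M t false : ℝ) / M := by
  have hsum : (labelCount M t true : ℝ) + labelCount M t false = M := by
    exact_mod_cast labelCount_true_add_false
  rw [prevalence, one_sub_div (by exact_mod_cast hM), ← hsum, add_sub_cancel_left]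

theorem decisionCount_eq_add (c : Fin 3 → Fin M → Bool) (L : Fin 3 → Bool) :
    decisionCount M c L = #{d | t d = true ∧ ∀ i, c i d = L i}
      + #{d | t d = false ∧ ∀ i, c i d = L i} := by
  rw [decisionCount, card_filter_eq_card_filter_and_true_add_false _ t]

theorem ite_accuracy_eq_div (c : Fin M → Bool) {ℓ : Bool} (hℓ : labelCount M t ℓ ≠ 0)
    (l : Bool) :
    (if l = ℓ then accuracy M t c ℓ else 1 - accuracy M t c ℓ)
      = (#{d | t d = ℓ ∧ c d = l} : ℝ) / labelCount M t ℓ := by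
  have hsplit : (#{d | t d = ℓ ∧ c d = true} : ℝ) + #{d | t d = ℓ ∧ c d = false}
      = labelCount M t ℓ := by
    have h := card_filter_eq_card_filter_and_true_add_false (t · = ℓ) c
    simp only [and_comm (a := c _ = _)] at h
    rw [labelCount, h, Nat.cast_add]
  have hℓR : (labelCount M t ℓ : ℝ) ≠ 0 := by exact_mod_cast hℓ
  split_ifs with h
  · rw [h, accuracy]
  · rw [accuracy, one_sub_div hℓR]
    congr 1
    cases ℓ <;> cases l <;> first | exact (h rfl).elim | linarith

theorem labelCount_mul_prod_ite_accuracy {c : Fin 3 → Fin M → Bool}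
    (hind : IndependentErrors M t c) (ℓ : Bool) (L : Fin 3 → Bool) :
    (labelCount M t ℓ : ℝ) *
        ∏ i, (if L i = ℓ then accuracy M t (c i) ℓ else 1 - accuracy M t (c i) ℓ)
      = #{d | t d = ℓ ∧ ∀ i, c i d = L i} := by
  rcases (labelCount M t ℓ).eq_zero_or_pos with h0 | hpos
  · have hjoint : #{d | t d = ℓ ∧ ∀ i, c i d = L i} ≤ labelCount M t ℓ :=
      card_le_card (monotone_filter_right _ fun _ _ => And.left)
    simp [h0, Nat.le_zero.mp (h0 ▸ hjoint)]
  · have hindR : (labelCount M t ℓ : ℝ) ^ 2 * #{d | t d = ℓ ∧ ∀ i, c i d = L i}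
        = ∏ i, (#{d | t d = ℓ ∧ c i d = L i} : ℝ) := by
      exact_mod_cast hind ℓ hpos L
    simp_rw [ite_accuracy_eq_div _ hpos.ne']
    rw [prod_div_distrib, prod_const, card_univ, Fintype.card_fin, ← hindR]
    field_simp

end Sample

theorem ground_truth_satisfies_quartic_system_general
    (M : ℕ) (hM : 1 ≤ M) (t : Fin M → Bool) (c : Fin 3 → Fin M → Bool)
    (hind : IndependentErrors M t c) :
    ∀ L : Fin 3 → Bool,
      (decisionCount M c L : ℝ) / M =
        quarticRHS (prevalence M t)
          (fun i => accuracy M t (c i) true)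
          (fun i => accuracy M t (c i) false) L := by
  intro L
  have hβ_factor : ∀ i, (if L i then 1 - accuracy M t (c i) false else accuracy M t (c i) false)
      = if L i = false then accuracy M t (c i) false else 1 - accuracy M t (c i) false := by
    intro i
    cases L i <;> rfl
  rw [quarticRHS, one_sub_prevalence (by omega), prevalence, prod_congr rfl fun i _ => hβ_factor i,
    div_mul_eq_mul_div, div_mul_eq_mul_div, labelCount_mul_prod_ite_accuracy hind,
    labelCount_mul_prod_ite_accuracy hind, ← add_div, decisionCount_eq_add (t := t), Nat.cast_add]

/-- If three binary classifiers are independent in their errors on a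
sample in which both labels occur, then the ground-truth tuple
`(φ_α, φ_{1,α}, φ_{2,α}, φ_{3,α}, φ_{1,β}, φ_{2,β}, φ_{3,β})` satisfies the
independent-classifiers quartic system associated with the observed frequencies
`f_{ℓ₁,ℓ₂,ℓ₃} = m_{ℓ₁,ℓ₂,ℓ₃}/M`. -/
theorem ground_truth_satisfies_quartic_system
    (M : ℕ) (hM : 1 ≤ M) (t : Fin M → Bool) (c : Fin 3 → Fin M → Bool)
    (hα : 0 < labelCount M t true) (hβ : 0 < labelCount M t false)
    (hind : IndependentErrors M t c) :
    ∀ L : Fin 3 → Bool,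
      (decisionCount M c L : ℝ) / M =
        quarticRHS (prevalence M t)
          (fun i => accuracy M t (c i) true)
          (fun i => accuracy M t (c i) false) L :=
  ground_truth_satisfies_quartic_system_general M hM t c hind
end

section
/- For two arbitrarily correlated binary classifiers on a sample in which both labels occur, the number of items on which classifier 1 outputs α and classifier 2 outputs β satisfies the exact polynomial identity m_{α,β} = m(α)·(φ_{1,α}·(1 − φ_{2,α}) − Γ_{1,2;α}) + m(β)·((1 − φ_{1,β})·φ_{2,β} − Γ_{1,2;β}). -/
/-!
Labels are modeled by `Bool`, with `true` playing the role of α and `false` the role of β.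
A sample is `Fin M` with a true-label function `t : Fin M → Bool`; binary classifiers
are functions `Fin M → Bool`.
-/

open Finset

/-- The indicator `x_{d,i}`: `1` if classifier `c` labels item `d` correctly, else `0`. -/
noncomputable def xind (M : ℕ) (t : Fin M → Bool) (c : Fin M → Bool) (d : Fin M) : ℝ :=
  if c d = t d then 1 else 0

/-- The 2-way error correlation `Γ_{i,j;ℓ}` of classifiers `ci`, `cj` on label `ℓ`. -/
noncomputable def gamma2 (M : ℕ) (t : Fin M → Bool) (ci cj : Fin M → Bool) (ℓ : Bool) : ℝ :=
  (∑ d ∈ univ.filter fun d => t d = ℓ,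
      (xind M t ci d - accuracy M t ci ℓ) * (xind M t cj d - accuracy M t cj ℓ)) /
    (labelCount M t ℓ : ℝ)

/-- The 3-way error correlation `Γ_{1,2,3;ℓ}` of three classifiers on label `ℓ`. -/
noncomputable def gamma3 (M : ℕ) (t : Fin M → Bool) (c1 c2 c3 : Fin M → Bool) (ℓ : Bool) : ℝ :=
  (∑ d ∈ univ.filter fun d => t d = ℓ,
      (xind M t c1 d - accuracy M t c1 ℓ) * (xind M t c2 d - accuracy M t c2 ℓ) *
        (xind M t c3 d - accuracy M t c3 ℓ)) /
    (labelCount M t ℓ : ℝ)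

/-
Averaged over the items of one true label, `Γ` is a covariance, so it equals the mean of
`x₁x₂` minus `φ₁φ₂`; hence `m(ℓ)(φ₁(1 - φ₂) - Γ)` counts the items of label `ℓ` on which
classifier 1 is right and classifier 2 is wrong. The items with `c₁ = α, c₂ = β` are exactly
those of label α with classifier 1 right and 2 wrong, together with those of label β with
classifier 2 right and 1 wrong.
-/

theorem Finset.sum_sub_avg_mul_sub_avg_div_card {ι : Type*} (s : Finset ι) (f g : ι → ℝ) :
    (∑ i ∈ s, (f i - (∑ j ∈ s, f j) / #s) * (g i - (∑ j ∈ s, g j) / #s)) / #s =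
      (∑ i ∈ s, f i * g i) / #s - (∑ i ∈ s, f i) / #s * ((∑ i ∈ s, g i) / #s) := by
  rcases s.eq_empty_or_nonempty with rfl | hs
  · simp
  have hcard : (#s : ℝ) ≠ 0 := by exact_mod_cast hs.card_pos.ne'
  simp only [sub_mul, mul_sub, sum_sub_distrib, ← sum_mul, ← mul_sum, sum_const, nsmul_eq_mul]
  field_simp
  ring

section Classifiers

variable {M : ℕ} (t : Fin M → Bool)

theorem xind_of_label_eq {c : Fin M → Bool} {ℓ : Bool} {d : Fin M} (hd : t d = ℓ) :
    xind M t c d = if c d = ℓ then 1 else 0 := by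
  rw [xind, hd]

theorem sum_xind_eq_card (c : Fin M → Bool) (ℓ : Bool) :
    ∑ d ∈ univ.filter (fun d => t d = ℓ), xind M t c d =
      (univ.filter fun d => t d = ℓ ∧ c d = ℓ).card := by
  rw [sum_congr rfl fun d hd => xind_of_label_eq t (mem_filter.1 hd).2, sum_boole,
    filter_filter]

theorem sum_xind_mul_xind_eq_card (c1 c2 : Fin M → Bool) (ℓ : Bool) :
    ∑ d ∈ univ.filter (fun d => t d = ℓ), xind M t c1 d * xind M t c2 d =
      (univ.filter fun d => t d = ℓ ∧ c1 d = ℓ ∧ c2 d = ℓ).card := by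
  have hterm : ∀ d ∈ univ.filter (fun d => t d = ℓ),
      xind M t c1 d * xind M t c2 d = if c1 d = ℓ ∧ c2 d = ℓ then 1 else 0 := fun d hd => by
    rw [xind_of_label_eq t (mem_filter.1 hd).2, xind_of_label_eq t (mem_filter.1 hd).2,
      ite_zero_mul_ite_zero, one_mul]
  rw [sum_congr rfl hterm, sum_boole, filter_filter]

theorem accuracy_eq_sum_xind_div (c : Fin M → Bool) (ℓ : Bool) :
    accuracy M t c ℓ =
      (∑ d ∈ univ.filter (fun d => t d = ℓ), xind M t c d) / labelCount M t ℓ := by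
  rw [accuracy, sum_xind_eq_card]

theorem gamma2_eq_sub_accuracy_mul_accuracy (c1 c2 : Fin M → Bool) (ℓ : Bool) :
    gamma2 M t c1 c2 ℓ =
      (univ.filter fun d => t d = ℓ ∧ c1 d = ℓ ∧ c2 d = ℓ).card / labelCount M t ℓ -
        accuracy M t c1 ℓ * accuracy M t c2 ℓ := by
  rw [gamma2, accuracy_eq_sum_xind_div, accuracy_eq_sum_xind_div, labelCount,
    sum_sub_avg_mul_sub_avg_div_card, sum_xind_mul_xind_eq_card]

theorem gamma2_comm (c1 c2 : Fin M → Bool) (ℓ : Bool) :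
    gamma2 M t c1 c2 ℓ = gamma2 M t c2 c1 ℓ := by
  simp only [gamma2, mul_comm]

theorem labelCount_mul_div_labelCount {p : Fin M → Prop} [DecidablePred p] (ℓ : Bool) :
    (labelCount M t ℓ : ℝ) * ((univ.filter fun d => t d = ℓ ∧ p d).card / labelCount M t ℓ) =
      (univ.filter fun d => t d = ℓ ∧ p d).card := by
  refine mul_div_cancel_of_imp' fun h => ?_
  have hsub : (univ.filter fun d => t d = ℓ ∧ p d) ⊆ univ.filter fun d => t d = ℓ :=
    monotone_filter_right _ fun _ _ => And.left
  have hle : (univ.filter fun d => t d = ℓ ∧ p d).card ≤ labelCount M t ℓ := card_le_card hsub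
  rw [Nat.cast_eq_zero] at h ⊢
  omega

theorem labelCount_mul_accuracy_mul_one_sub_sub_gamma2 (c1 c2 : Fin M → Bool) (ℓ : Bool) :
    (labelCount M t ℓ : ℝ) * (accuracy M t c1 ℓ * (1 - accuracy M t c2 ℓ) - gamma2 M t c1 c2 ℓ) =
      (univ.filter fun d => t d = ℓ ∧ c1 d = ℓ ∧ c2 d ≠ ℓ).card := by
  have hsplit : ((univ.filter fun d => t d = ℓ ∧ c1 d = ℓ ∧ c2 d = ℓ).card : ℝ) +
      (univ.filter fun d => t d = ℓ ∧ c1 d = ℓ ∧ c2 d ≠ ℓ).card =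
        (univ.filter fun d => t d = ℓ ∧ c1 d = ℓ).card := by
    have := card_filter_add_card_filter_not
      (s := univ.filter fun d => t d = ℓ ∧ c1 d = ℓ) fun d => c2 d = ℓ
    simp only [filter_filter, and_assoc] at this
    exact_mod_cast this
  have hcorrect := labelCount_mul_div_labelCount t (p := fun d => c1 d = ℓ) ℓ
  have hboth := labelCount_mul_div_labelCount t (p := fun d => c1 d = ℓ ∧ c2 d = ℓ) ℓ
  rw [gamma2_eq_sub_accuracy_mul_accuracy, accuracy, accuracy]
  linear_combination hcorrect - hboth - hsplit

end Classifiers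

theorem decision_count_pair_identity_general
    (M : ℕ) (t : Fin M → Bool) (c1 c2 : Fin M → Bool) :
    ((univ.filter fun d => c1 d = true ∧ c2 d = false).card : ℝ) =
      (labelCount M t true : ℝ) *
        (accuracy M t c1 true * (1 - accuracy M t c2 true) - gamma2 M t c1 c2 true) +
      (labelCount M t false : ℝ) *
        ((1 - accuracy M t c1 false) * accuracy M t c2 false - gamma2 M t c1 c2 false) := by
  have hfalse := labelCount_mul_accuracy_mul_one_sub_sub_gamma2 t c2 c1 false
  rw [gamma2_comm, mul_comm (accuracy M t c2 false)] at hfalse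
  rw [labelCount_mul_accuracy_mul_one_sub_sub_gamma2, hfalse,
    ← card_filter_add_card_filter_not (s := univ.filter fun d => c1 d = true ∧ c2 d = false)
      fun d => t d = true]
  push_cast
  congr 3 <;> ext d <;> simp only [mem_filter, mem_univ, true_and] <;>
    cases t d <;> cases c1 d <;> cases c2 d <;> simp

/-- For two arbitrarily correlated binary classifiers on a sample in
which both labels occur, the number of items on which classifier 1 outputs α and
classifier 2 outputs β satisfies the exact polynomial identity
`m_{α,β} = m(α)·(φ_{1,α}·(1 − φ_{2,α}) − Γ_{1,2;α})
        + m(β)·((1 − φ_{1,β})·φ_{2,β} − Γ_{1,2;β})`. -/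
theorem decision_count_pair_identity
    (M : ℕ) (t : Fin M → Bool) (c1 c2 : Fin M → Bool)
    (hα : 0 < labelCount M t true) (hβ : 0 < labelCount M t false) :
    ((univ.filter fun d => c1 d = true ∧ c2 d = false).card : ℝ) =
      (labelCount M t true : ℝ) *
        (accuracy M t c1 true * (1 - accuracy M t c2 true) - gamma2 M t c1 c2 true) +
      (labelCount M t false : ℝ) *
        ((1 - accuracy M t c1 false) * accuracy M t c2 false - gamma2 M t c1 c2 false) :=
  decision_count_pair_identity_general M t c1 c2
end

section
/- For three arbitrarily correlated binary classifiers on a sample of M items in which both labels occur, the frequency of the decision event (β, α, β) satisfies the exact polynomial identity m_{β,α,β}/M = φ_α·((1 − φ_{1,α})·φ_{2,α}·(1 − φ_{3,α}) − Γ_{1,2;α}·(1 − φ_{3,α}) + Γ_{1,3;α}·φ_{2,α} − Γ_{2,3;α}·(1 − φ_{1,α}) + Γ_{1,2,3;α}) + (1 − φ_α)·(φ_{1,β}·(1 − φ_{2,β})·φ_{3,β} − Γ_{1,2;β}·φ_{3,β} + Γ_{1,3;β}·(1 − φ_{2,β}) − Γ_{2,3;β}·φ_{1,β} − Γ_{1,2,3;β}).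 -/
/-!
Labels are modeled by `Bool`, with `true` playing the role of α and `false` the role of β.
A sample is `Fin M` with a true-label function `t : Fin M → Bool`; binary classifiers
are functions `Fin M → Bool`.
-/

open Finset

/-!
Split the items by true label. On an item labelled α the event (β, α, β) says that
classifiers 1 and 3 err and classifier 2 is right, so its indicator is `(1 - x₁) x₂ (1 - x₃)`;
on an item labelled β it is `x₁ (1 - x₂) x₃`. Expanding a triple product around the means
over a label class gives the product of the means plus the centred second and third moments,
which are the Γ's; the linear terms drop out because centred quantities sum to zero.
-/

theorem Finset.sum_mul_mul_eq_centered {ι R : Type*} [CommRing R] (S : Finset ι)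
    (f g h : ι → R) (a b c : R) (hf : ∑ i ∈ S, f i = #S * a) (hg : ∑ i ∈ S, g i = #S * b)
    (hh : ∑ i ∈ S, h i = #S * c) :
    ∑ i ∈ S, f i * g i * h i =
      #S * (a * b * c) + c * ∑ i ∈ S, (f i - a) * (g i - b)
        + b * ∑ i ∈ S, (f i - a) * (h i - c) + a * ∑ i ∈ S, (g i - b) * (h i - c)
        + ∑ i ∈ S, (f i - a) * (g i - b) * (h i - c) := by
  have expand : ∀ i, f i * g i * h i =
      a * b * c + b * c * (f i - a) + a * c * (g i - b) + a * b * (h i - c)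
        + c * ((f i - a) * (g i - b)) + b * ((f i - a) * (h i - c))
        + a * ((g i - b) * (h i - c)) + (f i - a) * (g i - b) * (h i - c) := by
    intro i; ring
  simp only [expand, sum_add_distrib, ← mul_sum, sum_sub_distrib, sum_const, nsmul_eq_mul,
    hf, hg, hh]
  ring

section LabelClass

variable {M : ℕ} (t : Fin M → Bool) (ℓ : Bool)

lemma sum_filter_label_eq_zero {R : Type*} [AddCommMonoid R] (f : Fin M → R)
    (h : (labelCount M t ℓ : ℝ) = 0) : ∑ d ∈ univ.filter (fun d => t d = ℓ), f d = 0 := by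
  rw [card_eq_zero.1 (by exact_mod_cast h : labelCount M t ℓ = 0), sum_empty]

-- Also for an empty label class, where `accuracy` is the junk value `0 / 0 = 0`.
lemma labelCount_mul_accuracy (c : Fin M → Bool) :
    (labelCount M t ℓ : ℝ) * accuracy M t c ℓ = #(univ.filter fun d => t d = ℓ ∧ c d = ℓ) := by
  refine mul_div_cancel_of_imp' fun h => ?_
  have hle : #(univ.filter fun d => t d = ℓ ∧ c d = ℓ) ≤ labelCount M t ℓ :=
    card_le_card (monotone_filter_right _ fun _ _ => And.left)
  rw [(by exact_mod_cast h : labelCount M t ℓ = 0), Nat.le_zero] at hle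
  exact_mod_cast hle

lemma sum_xind_filter_label (c : Fin M → Bool) :
    ∑ d ∈ univ.filter (fun d => t d = ℓ), xind M t c d = labelCount M t ℓ * accuracy M t c ℓ := by
  rw [labelCount_mul_accuracy, ← filter_filter, natCast_card_filter]
  refine sum_congr rfl fun d hd => ?_
  rw [xind, (mem_filter.1 hd).2]

lemma sum_one_sub_xind_filter_label (c : Fin M → Bool) :
    ∑ d ∈ univ.filter (fun d => t d = ℓ), (1 - xind M t c d) =
      labelCount M t ℓ * (1 - accuracy M t c ℓ) := by
  rw [sum_sub_distrib, sum_xind_filter_label, sum_const, nsmul_one, mul_one_sub]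
  rfl

lemma gamma2_mul_labelCount (ci cj : Fin M → Bool) :
    gamma2 M t ci cj ℓ * labelCount M t ℓ = ∑ d ∈ univ.filter (fun d => t d = ℓ),
      (xind M t ci d - accuracy M t ci ℓ) * (xind M t cj d - accuracy M t cj ℓ) :=
  div_mul_cancel_of_imp (sum_filter_label_eq_zero t ℓ _)

lemma gamma3_mul_labelCount (c1 c2 c3 : Fin M → Bool) :
    gamma3 M t c1 c2 c3 ℓ * labelCount M t ℓ = ∑ d ∈ univ.filter (fun d => t d = ℓ),
      (xind M t c1 d - accuracy M t c1 ℓ) * (xind M t c2 d - accuracy M t c2 ℓ) *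
        (xind M t c3 d - accuracy M t c3 ℓ) :=
  div_mul_cancel_of_imp (sum_filter_label_eq_zero t ℓ _)

end LabelClass

section DecisionEvent

variable {M : ℕ} (t c1 c2 c3 : Fin M → Bool)

lemma decision_indicator_of_label_true {d : Fin M} (hd : t d = true) :
    (if c1 d = false ∧ c2 d = true ∧ c3 d = false then (1 : ℝ) else 0) =
      (1 - xind M t c1 d) * xind M t c2 d * (1 - xind M t c3 d) := by
  simp only [xind, hd]
  cases c1 d <;> cases c2 d <;> cases c3 d <;> norm_num

lemma decision_indicator_of_label_false {d : Fin M} (hd : t d = false) :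
    (if c1 d = false ∧ c2 d = true ∧ c3 d = false then (1 : ℝ) else 0) =
      xind M t c1 d * (1 - xind M t c2 d) * xind M t c3 d := by
  simp only [xind, hd]
  cases c1 d <;> cases c2 d <;> cases c3 d <;> norm_num

lemma sum_decision_indicator_label_true :
    ∑ d ∈ univ.filter (fun d => t d = true),
        (if c1 d = false ∧ c2 d = true ∧ c3 d = false then (1 : ℝ) else 0) =
      labelCount M t true *
        ((1 - accuracy M t c1 true) * accuracy M t c2 true * (1 - accuracy M t c3 true)
          - gamma2 M t c1 c2 true * (1 - accuracy M t c3 true)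
          + gamma2 M t c1 c3 true * accuracy M t c2 true
          - gamma2 M t c2 c3 true * (1 - accuracy M t c1 true)
          + gamma3 M t c1 c2 c3 true) := by
  have centered_one_sub : ∀ x p : ℝ, 1 - x - (1 - p) = -(x - p) := fun _ _ => by ring
  rw [sum_congr rfl fun d hd => decision_indicator_of_label_true t c1 c2 c3 (mem_filter.1 hd).2,
    sum_mul_mul_eq_centered _ _ _ _ _ _ _ (sum_one_sub_xind_filter_label t true c1)
      (sum_xind_filter_label t true c2) (sum_one_sub_xind_filter_label t true c3)]
  simp only [centered_one_sub, neg_mul, mul_neg, neg_neg, sum_neg_distrib,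
    ← gamma2_mul_labelCount, ← gamma3_mul_labelCount, ← labelCount.eq_1]
  ring

lemma sum_decision_indicator_label_false :
    ∑ d ∈ univ.filter (fun d => t d = false),
        (if c1 d = false ∧ c2 d = true ∧ c3 d = false then (1 : ℝ) else 0) =
      labelCount M t false *
        (accuracy M t c1 false * (1 - accuracy M t c2 false) * accuracy M t c3 false
          - gamma2 M t c1 c2 false * accuracy M t c3 false
          + gamma2 M t c1 c3 false * (1 - accuracy M t c2 false)
          - gamma2 M t c2 c3 false * accuracy M t c1 false
          - gamma3 M t c1 c2 c3 false) := by
  have centered_one_sub : ∀ x p : ℝ, 1 - x - (1 - p) = -(x - p) := fun _ _ => by ring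
  rw [sum_congr rfl fun d hd => decision_indicator_of_label_false t c1 c2 c3 (mem_filter.1 hd).2,
    sum_mul_mul_eq_centered _ _ _ _ _ _ _ (sum_xind_filter_label t false c1)
      (sum_one_sub_xind_filter_label t false c2) (sum_xind_filter_label t false c3)]
  simp only [centered_one_sub, neg_mul, mul_neg, sum_neg_distrib,
    ← gamma2_mul_labelCount, ← gamma3_mul_labelCount, ← labelCount.eq_1]
  ring

end DecisionEvent

lemma labelCount_true_add_labelCount_false (M : ℕ) (t : Fin M → Bool) :
    labelCount M t true + labelCount M t false = M := by
  have h := card_filter_add_card_filter_not (s := univ) fun d => t d = true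
  simp only [Bool.not_eq_true, card_univ, Fintype.card_fin] at h
  exact h

theorem decision_frequency_triple_identity_general
    (M : ℕ) (hM : 1 ≤ M) (t : Fin M → Bool) (c1 c2 c3 : Fin M → Bool) :
    ((univ.filter fun d => c1 d = false ∧ c2 d = true ∧ c3 d = false).card : ℝ) / M =
      prevalence M t *
        ((1 - accuracy M t c1 true) * accuracy M t c2 true * (1 - accuracy M t c3 true)
          - gamma2 M t c1 c2 true * (1 - accuracy M t c3 true)
          + gamma2 M t c1 c3 true * accuracy M t c2 true
          - gamma2 M t c2 c3 true * (1 - accuracy M t c1 true)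
          + gamma3 M t c1 c2 c3 true) +
      (1 - prevalence M t) *
        (accuracy M t c1 false * (1 - accuracy M t c2 false) * accuracy M t c3 false
          - gamma2 M t c1 c2 false * accuracy M t c3 false
          + gamma2 M t c1 c3 false * (1 - accuracy M t c2 false)
          - gamma2 M t c2 c3 false * accuracy M t c1 false
          - gamma3 M t c1 c2 c3 false) := by
  have hM₀ : (M : ℝ) ≠ 0 := by positivity
  have hcount : (labelCount M t true : ℝ) + labelCount M t false = M := by
    exact_mod_cast labelCount_true_add_labelCount_false M t
  have one_sub_prevalence : 1 - prevalence M t = labelCount M t false / M := by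
    rw [prevalence, eq_div_iff hM₀, sub_mul, div_mul_cancel₀ _ hM₀]
    linarith
  rw [natCast_card_filter, ← sum_filter_add_sum_filter_not univ fun d => t d = true]
  simp only [Bool.not_eq_true]
  rw [sum_decision_indicator_label_true, sum_decision_indicator_label_false,
    one_sub_prevalence, prevalence]
  ring

/-- For three arbitrarily correlated binary classifiers on a sample of
`M` items in which both labels occur, the frequency of the decision event `(β, α, β)`
satisfies the exact polynomial identity
`m_{β,α,β}/M = φ_α·((1 − φ_{1,α})·φ_{2,α}·(1 − φ_{3,α}) − Γ_{1,2;α}·(1 − φ_{3,α})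
                 + Γ_{1,3;α}·φ_{2,α} − Γ_{2,3;α}·(1 − φ_{1,α}) + Γ_{1,2,3;α})
            + (1 − φ_α)·(φ_{1,β}·(1 − φ_{2,β})·φ_{3,β} − Γ_{1,2;β}·φ_{3,β}
                 + Γ_{1,3;β}·(1 − φ_{2,β}) − Γ_{2,3;β}·φ_{1,β} − Γ_{1,2,3;β})`. -/
theorem decision_frequency_triple_identity
    (M : ℕ) (hM : 1 ≤ M) (t : Fin M → Bool) (c1 c2 c3 : Fin M → Bool)
    (hα : 0 < labelCount M t true) (hβ : 0 < labelCount M t false) :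
    ((univ.filter fun d => c1 d = false ∧ c2 d = true ∧ c3 d = false).card : ℝ) / M =
      prevalence M t *
        ((1 - accuracy M t c1 true) * accuracy M t c2 true * (1 - accuracy M t c3 true)
          - gamma2 M t c1 c2 true * (1 - accuracy M t c3 true)
          + gamma2 M t c1 c3 true * accuracy M t c2 true
          - gamma2 M t c2 c3 true * (1 - accuracy M t c1 true)
          + gamma3 M t c1 c2 c3 true) +
      (1 - prevalence M t) *
        (accuracy M t c1 false * (1 - accuracy M t c2 false) * accuracy M t c3 false
          - gamma2 M t c1 c2 false * accuracy M t c3 false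
          + gamma2 M t c1 c3 false * (1 - accuracy M t c2 false)
          - gamma2 M t c2 c3 false * accuracy M t c1 false
          - gamma3 M t c1 c2 c3 false) :=
  decision_frequency_triple_identity_general M hM t c1 c2 c3
end

section
/- For any two scalar regressors i and j on a sample, the following ground-truth-invariant equation holds: ε_{i,i} + ε_{j,j} − 2·ε_{i,j} = (1/D) Σ_{d=1}^{D} y_{d,i}² + (1/D) Σ_{d=1}^{D} y_{d,j}² − (2/D) Σ_{d=1}^{D} y_{d,i}·y_{d,j}; in particular the right-hand side involves no knowledge of the ground-truth values y_d. -/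
/-!
The ground truth cancels pointwise: `(y - a)² + (y - b)² - 2 (y - a)(y - b) = (a - b)²`, so
`ε_{i,i} + ε_{j,j} - 2 ε_{i,j}` is the mean squared difference of the two regressors' estimates.
-/

/-- The error covariance `ε_{i,j} = (1/D) Σ_d (y_d − y_{d,i})(y_d − y_{d,j})` of two
regressors with estimates `yi`, `yj`, relative to the ground truth `y`. -/
noncomputable def errCov (D : ℕ) (y yi yj : Fin D → ℝ) : ℝ :=
  (∑ d, (y d - yi d) * (y d - yj d)) / D

open Finset

theorem sum_mul_self_sub_add_sum_mul_self_sub_sub_two_mul_sum {ι R : Type*} [CommRing R]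
    (s : Finset ι) (y a b : ι → R) :
    ∑ i ∈ s, (y i - a i) * (y i - a i) + ∑ i ∈ s, (y i - b i) * (y i - b i)
        - 2 * ∑ i ∈ s, (y i - a i) * (y i - b i) = ∑ i ∈ s, (a i - b i) ^ 2 := by
  rw [mul_sum, ← sum_add_distrib, ← sum_sub_distrib]
  exact sum_congr rfl fun i _ => by ring

theorem errCov_self_add_errCov_self_sub_two_mul_errCov (D : ℕ) (y yi yj : Fin D → ℝ) :
    errCov D y yi yi + errCov D y yj yj - 2 * errCov D y yi yj =
      (∑ d, (yi d - yj d) ^ 2) / D := by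
  rw [← sum_mul_self_sub_add_sum_mul_self_sub_sub_two_mul_sum _ y]
  simp only [errCov]
  ring

theorem pair_regressor_ground_truth_invariant_equation_general
    (D : ℕ) (y yi yj : Fin D → ℝ) :
    errCov D y yi yi + errCov D y yj yj - 2 * errCov D y yi yj =
      (∑ d, (yi d) ^ 2) / D + (∑ d, (yj d) ^ 2) / D - 2 * (∑ d, yi d * yj d) / D := by
  rw [errCov_self_add_errCov_self_sub_two_mul_errCov]
  simp only [sub_sq, sum_add_distrib, sum_sub_distrib, mul_assoc, ← mul_sum]
  ring

/-- For any two scalar regressors `i` and `j` on a sample, the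
ground-truth-invariant equation holds:
`ε_{i,i} + ε_{j,j} − 2·ε_{i,j}
  = (1/D) Σ_d y_{d,i}² + (1/D) Σ_d y_{d,j}² − (2/D) Σ_d y_{d,i}·y_{d,j}`;
the right-hand side involves no knowledge of the ground-truth values `y_d`. -/
theorem pair_regressor_ground_truth_invariant_equation
    (D : ℕ) (hD : 1 ≤ D) (y yi yj : Fin D → ℝ) :
    errCov D y yi yi + errCov D y yj yj - 2 * errCov D y yi yj =
      (∑ d, (yi d) ^ 2) / D + (∑ d, (yj d) ^ 2) / D - 2 * (∑ d, yi d * yj d) / D :=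
  pair_regressor_ground_truth_invariant_equation_general D y yi yj
end

section
/- For any four scalar regressors i, j, k, l on a sample with any ground-truth values, the following identity holds: ε_{i,j} + ε_{k,l} − ε_{i,k} − ε_{j,l} = (1/D) Σ_{d=1}^{D} (y_{d,j} − y_{d,k})·(y_{d,i} − y_{d,l}); in particular the left-hand side does not depend on the ground-truth values y_d. -/
open Finset

theorem sub_mul_sub_add_sub_mul_sub_sub_sub_mul_sub_sub_sub_mul_sub {R : Type*} [CommRing R]
    (t a b c e : R) :
    (t - a) * (t - b) + (t - c) * (t - e) - (t - a) * (t - c) - (t - b) * (t - e) =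
      (b - c) * (a - e) := by
  ring

theorem errCov_add_errCov_sub_errCov_sub_errCov (D : ℕ) (y yi yj yk yl : Fin D → ℝ) :
    errCov D y yi yj + errCov D y yk yl - errCov D y yi yk - errCov D y yj yl =
      (∑ d, (yj d - yk d) * (yi d - yl d)) / D := by
  simp only [errCov, ← add_div, ← sub_div, ← sum_add_distrib, ← sum_sub_distrib,
    sub_mul_sub_add_sub_mul_sub_sub_sub_mul_sub_sub_sub_mul_sub]

theorem four_regressor_cross_term_identity_general
    (D : ℕ) (y yi yj yk yl : Fin D → ℝ) :
    (errCov D y yi yj + errCov D y yk yl - errCov D y yi yk - errCov D y yj yl =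
      (∑ d, (yj d - yk d) * (yi d - yl d)) / D) ∧
    (∀ y' : Fin D → ℝ,
      errCov D y' yi yj + errCov D y' yk yl - errCov D y' yi yk - errCov D y' yj yl =
        errCov D y yi yj + errCov D y yk yl - errCov D y yi yk - errCov D y yj yl) := by
  refine ⟨errCov_add_errCov_sub_errCov_sub_errCov D y yi yj yk yl, fun y' => ?_⟩
  rw [errCov_add_errCov_sub_errCov_sub_errCov, errCov_add_errCov_sub_errCov_sub_errCov]

/-- For any four scalar regressors `i, j, k, l` on a sample with any
ground-truth values, the identity
`ε_{i,j} + ε_{k,l} − ε_{i,k} − ε_{j,l} = (1/D) Σ_d (y_{d,j} − y_{d,k})·(y_{d,i} − y_{d,l})`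
holds; in particular the left-hand side does not depend on the ground-truth values `y_d`. -/
theorem four_regressor_cross_term_identity
    (D : ℕ) (hD : 1 ≤ D) (y yi yj yk yl : Fin D → ℝ) :
    (errCov D y yi yj + errCov D y yk yl - errCov D y yi yk - errCov D y yj yl =
      (∑ d, (yj d - yk d) * (yi d - yl d)) / D) ∧
    (∀ y' : Fin D → ℝ,
      errCov D y' yi yj + errCov D y' yk yl - errCov D y' yi yk - errCov D y' yj yl =
        errCov D y yi yj + errCov D y yk yl - errCov D y yi yk - errCov D y yj yl) :=
  four_regressor_cross_term_identity_general D y yi yj yk yl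
end

section
/- For any four scalar regressors i, j, k, l on a sample with any ground-truth values, the consistency constraint ε_{i,j} + ε_{k,l} = ε_{i,k} + ε_{j,l} holds if and only if the purely observable data moment vanishes: Σ_{d=1}^{D} (y_{d,j} − y_{d,k})·(y_{d,i} − y_{d,l}) = 0. Consequently, whether the consistency constraints of the four-trio test hold can be checked from the regressors' estimates alone, without knowledge of the ground truth. -/
/- The ground truth cancels pointwise:
`(t - a)(t - b) + (t - c)(t - e) - (t - a)(t - c) - (t - b)(t - e) = (b - c)(a - e)`. -/
theorem errCov_add_errCov_sub_errCov_add_errCov (D : ℕ) (y yi yj yk yl : Fin D → ℝ) :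
    errCov D y yi yj + errCov D y yk yl - (errCov D y yi yk + errCov D y yj yl) =
      (∑ d, (yj d - yk d) * (yi d - yl d)) / D := by
  simp only [errCov, ← add_div, ← sub_div, ← Finset.sum_add_distrib, ← Finset.sum_sub_distrib]
  congr 1
  exact Finset.sum_congr rfl fun d _ => by ring

theorem consistency_constraint_iff_data_moment_vanishes_general
    (D : ℕ) (y yi yj yk yl : Fin D → ℝ) :
    errCov D y yi yj + errCov D y yk yl = errCov D y yi yk + errCov D y yj yl ↔
      ∑ d, (yj d - yk d) * (yi d - yl d) = 0 := by
  rw [← sub_eq_zero, errCov_add_errCov_sub_errCov_add_errCov]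
  rcases D.eq_zero_or_pos with rfl | hD
  · simp
  · exact div_eq_zero_iff.trans (or_iff_left (Nat.cast_ne_zero.mpr hD.ne'))

/-- For any four scalar regressors `i, j, k, l` on a sample with any
ground-truth values, the consistency constraint `ε_{i,j} + ε_{k,l} = ε_{i,k} + ε_{j,l}`
holds if and only if the purely observable data moment vanishes:
`Σ_d (y_{d,j} − y_{d,k})·(y_{d,i} − y_{d,l}) = 0`.  Consequently, whether the consistency
constraints of the four-trio test hold can be checked from the regressors' estimates
alone, without knowledge of the ground truth. -/
theorem consistency_constraint_iff_data_moment_vanishes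
    (D : ℕ) (hD : 1 ≤ D) (y yi yj yk yl : Fin D → ℝ) :
    errCov D y yi yj + errCov D y yk yl = errCov D y yi yk + errCov D y yj yl ↔
      ∑ d, (yj d - yk d) * (yi d - yl d) = 0 :=
  consistency_constraint_iff_data_moment_vanishes_general D y yi yj yk yl
end
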